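/- Let M = (λI−A)⁻¹ with eigenvalues βᵢ and eigenvectors pᵢ, w_{t−1} a unit vector with coordinates ξᵢ = w_{t−1}⊤pᵢ, w̃* = M w_{t−1}, and let w̃ satisfy ½‖w̃ − w̃*‖²_{M⁻¹} ≤ ε_t. Define G(u) = √(Σ_{i≥2}(u⊤pᵢ)²/βᵢ)/√((u⊤p₁)²/β₁) for u ≠ 0 with u⊤p₁ ≠ 0. If √(2ε_t) ≤ min(√(Σ_{i≥2}ξᵢ²/βᵢ), √(ξ₁²/β₁))·(β₁−β₂)/4, then G(w̃/‖w̃‖) ≤ ((β₁+3β₂)/(3β₁+β₂)) · G(w_{t−1}). -/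

import Mathlib

/-!
Expand the error `e = w̃ - M w` in the eigenbasis: `w̃ᵀpᵢ = βᵢξᵢ + ηᵢ` with `ηᵢ = eᵀpᵢ`, and
`∑ ηᵢ²/βᵢ = ‖e‖²_{M⁻¹} ≤ 2ε`. Since `G` is scale invariant the normalisation of `w̃` is irrelevant.
Writing `G(w) = S/F`, Minkowski's inequality in the norm `∑ xᵢ²/βᵢ` bounds the numerator of
`G(w̃)` by `β₂S + √(2ε) ≤ (β₁+3β₂)/4 · S`, and the reverse triangle inequality bounds its
denominator below by `β₁F - √(2ε) ≥ (3β₁+β₂)/4 · F`.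
-/

open Matrix Finset

lemma Real.sqrt_sum_add_sq_le {ι : Type*} (s : Finset ι) (f g : ι → ℝ) :
    √(∑ i ∈ s, (f i + g i) ^ 2) ≤ √(∑ i ∈ s, f i ^ 2) + √(∑ i ∈ s, g i ^ 2) := by
  simpa [Real.sqrt_eq_rpow, Real.rpow_two, sq_abs] using Real.Lp_add_le s f g one_le_two

lemma sqrt_sum_sq_div_add_le {ι : Type*} (s : Finset ι) {β : ι → ℝ} {b : ℝ}
    (hβ : ∀ i ∈ s, 0 < β i) (hβb : ∀ i ∈ s, β i ≤ b) (hb : 0 ≤ b) (x η : ι → ℝ) :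
    √(∑ i ∈ s, (β i * x i + η i) ^ 2 / β i) ≤
      b * √(∑ i ∈ s, x i ^ 2 / β i) + √(∑ i ∈ s, η i ^ 2 / β i) := by
  have hsplit : ∀ i ∈ s, (β i * x i + η i) ^ 2 / β i = (√(β i) * x i + η i / √(β i)) ^ 2 := by
    intro i hi
    have hr : √(β i) ^ 2 = β i := Real.sq_sqrt (hβ i hi).le
    have hr0 : √(β i) ≠ 0 := (Real.sqrt_pos.2 (hβ i hi)).ne'
    generalize √(β i) = r at hr hr0 ⊢
    rw [← hr]
    field_simp
  have hη : ∀ i ∈ s, (η i / √(β i)) ^ 2 = η i ^ 2 / β i := fun i hi => by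
    rw [div_pow, Real.sq_sqrt (hβ i hi).le]
  have hx : ∑ i ∈ s, (√(β i) * x i) ^ 2 ≤ b ^ 2 * ∑ i ∈ s, x i ^ 2 / β i := by
    rw [mul_sum]
    refine sum_le_sum fun i hi => ?_
    have hb2 : β i ^ 2 ≤ b ^ 2 := pow_le_pow_left₀ (hβ i hi).le (hβb i hi) 2
    calc (√(β i) * x i) ^ 2 = β i ^ 2 * (x i ^ 2 / β i) := by
          rw [mul_pow, Real.sq_sqrt (hβ i hi).le]; field_simp [(hβ i hi).ne']
      _ ≤ b ^ 2 * (x i ^ 2 / β i) := by gcongr; exact div_nonneg (sq_nonneg _) (hβ i hi).le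
  calc √(∑ i ∈ s, (β i * x i + η i) ^ 2 / β i)
      = √(∑ i ∈ s, (√(β i) * x i + η i / √(β i)) ^ 2) := by rw [sum_congr rfl hsplit]
    _ ≤ √(∑ i ∈ s, (√(β i) * x i) ^ 2) + √(∑ i ∈ s, (η i / √(β i)) ^ 2) :=
        Real.sqrt_sum_add_sq_le s _ _
    _ ≤ √(b ^ 2 * ∑ i ∈ s, x i ^ 2 / β i) + √(∑ i ∈ s, η i ^ 2 / β i) := by
        rw [sum_congr rfl hη]; gcongr
    _ = b * √(∑ i ∈ s, x i ^ 2 / β i) + √(∑ i ∈ s, η i ^ 2 / β i) := by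
        rw [Real.sqrt_mul (sq_nonneg b), Real.sqrt_sq hb]

lemma sub_sqrt_sq_div_le {β : ℝ} (hβ : 0 < β) (x η : ℝ) :
    β * √(x ^ 2 / β) - √(η ^ 2 / β) ≤ √((β * x + η) ^ 2 / β) := by
  simp only [Real.sqrt_div' _ hβ.le, Real.sqrt_sq_eq_abs]
  rw [← mul_div_assoc, ← sub_div]
  gcongr
  simpa [abs_mul, abs_of_pos hβ] using abs_sub_abs_le_abs_add (β * x) η

section OrthonormalEigenbasis

variable {n : Type*} [Fintype n] {M : Matrix n n ℝ} {β : n → ℝ} {p : n → n → ℝ}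

lemma mulVec_dotProduct_of_eigenvector (hM : M.IsSymm) (h_eig : ∀ i, M *ᵥ p i = β i • p i)
    (w : n → ℝ) (i : n) : M *ᵥ w ⬝ᵥ p i = β i * (w ⬝ᵥ p i) := by
  rw [dotProduct_comm, dotProduct_mulVec, ← mulVec_transpose, hM.eq, h_eig, smul_dotProduct,
    smul_eq_mul, dotProduct_comm]

variable [DecidableEq n]

lemma mul_transpose_eq_one_of_orthonormal
    (h_orth : ∀ i j, p i ⬝ᵥ p j = if i = j then 1 else 0) : of p * (of p)ᵀ = 1 := by
  ext i j
  simpa [mul_apply, one_apply, dotProduct] using h_orth i j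

lemma mul_transpose_eq_transpose_mul_diagonal (h_eig : ∀ i, M *ᵥ p i = β i • p i) :
    M * (of p)ᵀ = (of p)ᵀ * diagonal β := by
  ext i j
  simpa [mul_apply, mulVec, dotProduct, diagonal_apply, mul_comm] using congrFun (h_eig j) i

lemma inv_eq_of_orthonormal_eigenvectors (hβ : ∀ i, β i ≠ 0)
    (h_orth : ∀ i j, p i ⬝ᵥ p j = if i = j then 1 else 0)
    (h_eig : ∀ i, M *ᵥ p i = β i • p i) :
    M⁻¹ = (of p)ᵀ * diagonal β⁻¹ * of p := by
  refine inv_eq_right_inv ?_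
  have hPP : (of p)ᵀ * of p = 1 := mul_eq_one_comm.mp (mul_transpose_eq_one_of_orthonormal h_orth)
  have hββ : diagonal β * diagonal β⁻¹ = 1 := by
    rw [diagonal_mul_diagonal, ← diagonal_one]
    exact congrArg diagonal (funext fun i => mul_inv_cancel₀ (hβ i))
  calc M * ((of p)ᵀ * diagonal β⁻¹ * of p)
      = (of p)ᵀ * (diagonal β * diagonal β⁻¹) * of p := by
        simp only [← Matrix.mul_assoc, mul_transpose_eq_transpose_mul_diagonal h_eig]
    _ = 1 := by rw [hββ, Matrix.mul_one, hPP]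

lemma dotProduct_inv_mulVec_eq_sum (hβ : ∀ i, β i ≠ 0)
    (h_orth : ∀ i j, p i ⬝ᵥ p j = if i = j then 1 else 0)
    (h_eig : ∀ i, M *ᵥ p i = β i • p i) (e : n → ℝ) :
    e ⬝ᵥ M⁻¹ *ᵥ e = ∑ i, (e ⬝ᵥ p i) ^ 2 / β i := by
  have hPe : of p *ᵥ e = fun i => e ⬝ᵥ p i := funext fun i => dotProduct_comm _ _
  rw [inv_eq_of_orthonormal_eigenvectors hβ h_orth h_eig, ← mulVec_mulVec, ← mulVec_mulVec,
    dotProduct_mulVec, vecMul_transpose, hPe]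
  simp only [dotProduct, mulVec_diagonal, Pi.inv_apply]
  exact sum_congr rfl fun i _ => by ring

end OrthonormalEigenbasis

section WeightedTan

variable {n : Type*} [Fintype n] [DecidableEq n] {β : n → ℝ} {k : n}

/-- The tangent of the angle between `x` and the `k`-th axis for the inner product
`∑ xᵢyᵢ/βᵢ`; the potential `G u` of the theorem is `weightedTan β k (fun i => u ⬝ᵥ p i)`. -/
noncomputable def weightedTan (β : n → ℝ) (k : n) (x : n → ℝ) : ℝ :=
  √(∑ i ∈ univ \ {k}, x i ^ 2 / β i) / √(x k ^ 2 / β k)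

lemma weightedTan_smul {c : ℝ} (hc : c ≠ 0) (x : n → ℝ) :
    weightedTan β k (c • x) = weightedTan β k x := by
  have hsum : ∑ i ∈ univ \ {k}, (c * x i) ^ 2 / β i = c ^ 2 * ∑ i ∈ univ \ {k}, x i ^ 2 / β i := by
    rw [mul_sum]
    exact sum_congr rfl fun i _ => by ring
  have hk : (c * x k) ^ 2 / β k = c ^ 2 * (x k ^ 2 / β k) := by ring
  simp only [weightedTan, Pi.smul_apply, smul_eq_mul, hsum, hk]
  rw [Real.sqrt_mul (sq_nonneg c), Real.sqrt_mul (sq_nonneg c),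
    mul_div_mul_left _ _ (Real.sqrt_ne_zero'.2 (by positivity))]

lemma weightedTan_normalize (p : n → n → ℝ) (v : n → ℝ) :
    weightedTan β k (fun i => ((√(v ⬝ᵥ v))⁻¹ • v) ⬝ᵥ p i) =
      weightedTan β k (fun i => v ⬝ᵥ p i) := by
  rcases eq_or_ne v 0 with rfl | hv
  · simp
  have hc : (√(v ⬝ᵥ v))⁻¹ ≠ 0 :=
    inv_ne_zero (Real.sqrt_ne_zero'.2 (dotProduct_star_self_pos_iff.2 hv))
  simp only [smul_dotProduct]
  exact weightedTan_smul hc _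

lemma weightedTan_mul_add_le {b : ℝ} (hβ : ∀ i, 0 < β i) (hβb : ∀ i ≠ k, β i ≤ b) (hb : 0 ≤ b)
    (hbk : b ≤ β k) {x η : n → ℝ} (hxk : x k ≠ 0)
    (hη : √(∑ i, η i ^ 2 / β i) ≤
      min (√(∑ i ∈ univ \ {k}, x i ^ 2 / β i)) (√(x k ^ 2 / β k)) * ((β k - b) / 4)) :
    weightedTan β k (fun i => β i * x i + η i) ≤
      (β k + 3 * b) / (3 * β k + b) * weightedTan β k x := by
  set S := √(∑ i ∈ univ \ {k}, x i ^ 2 / β i)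
  set F := √(x k ^ 2 / β k)
  have hgap : 0 ≤ (β k - b) / 4 := by linarith
  have hηS : √(∑ i ∈ univ \ {k}, η i ^ 2 / β i) ≤ S * ((β k - b) / 4) := by
    refine le_trans (Real.sqrt_le_sqrt ?_) (hη.trans (by gcongr; exact min_le_left _ _))
    exact sum_le_sum_of_subset_of_nonneg (subset_univ _) fun i _ _ => by
      have := hβ i; positivity
  have hηF : √(η k ^ 2 / β k) ≤ F * ((β k - b) / 4) := by
    refine le_trans (Real.sqrt_le_sqrt ?_) (hη.trans (by gcongr; exact min_le_right _ _))
    exact single_le_sum (f := fun i => η i ^ 2 / β i) (fun i _ => by have := hβ i; positivity)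
      (mem_univ k)
  have hnum : √(∑ i ∈ univ \ {k}, (β i * x i + η i) ^ 2 / β i) ≤ (β k + 3 * b) / 4 * S := by
    have := sqrt_sum_sq_div_add_le (univ \ {k}) (fun i _ => hβ i)
      (fun i hi => hβb i (by simpa using hi)) hb x η
    linarith
  have hden : (3 * β k + b) / 4 * F ≤ √((β k * x k + η k) ^ 2 / β k) := by
    have := sub_sqrt_sq_div_le (hβ k) (x k) (η k)
    linarith
  have hF : 0 < F := Real.sqrt_pos.2 (div_pos (by positivity) (hβ k))
  calc weightedTan β k (fun i => β i * x i + η i)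
      ≤ ((β k + 3 * b) / 4 * S) / ((3 * β k + b) / 4 * F) :=
        div_le_div₀ (by have := hβ k; positivity) hnum (by have := hβ k; positivity) hden
    _ = (β k + 3 * b) / (3 * β k + b) * weightedTan β k x := by
        have := hβ k
        rw [show weightedTan β k x = S / F from rfl]
        field_simp

end WeightedTan

theorem stmt15_general {d : ℕ} (hd : 1 < d) (M : Matrix (Fin d) (Fin d) ℝ) (hM : M.IsSymm)
    (β : Fin d → ℝ) (p : Fin d → (Fin d → ℝ))
    (hβ_pos : ∀ i, 0 < β i)
    (hβ_mono : ∀ i j : Fin d, i ≤ j → β j ≤ β i)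
    (h_orth : ∀ i j : Fin d, p i ⬝ᵥ p j = if i = j then 1 else 0)
    (h_eig : ∀ i, M.mulVec (p i) = β i • p i)
    (w : Fin d → ℝ)
    (ξ : Fin d → ℝ) (hξ : ∀ i, ξ i = w ⬝ᵥ p i)
    (hξ1 : ξ ⟨0, Nat.lt_of_succ_lt hd⟩ ≠ 0)
    (G : (Fin d → ℝ) → ℝ)
    (hG : ∀ u : Fin d → ℝ, G u =
      Real.sqrt (∑ i ∈ Finset.univ \ {(⟨0, Nat.lt_of_succ_lt hd⟩ : Fin d)},
          (u ⬝ᵥ p i) ^ 2 / β i)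
        / Real.sqrt ((u ⬝ᵥ p ⟨0, Nat.lt_of_succ_lt hd⟩) ^ 2 / β ⟨0, Nat.lt_of_succ_lt hd⟩))
    (εt : ℝ)
    (wtilde : Fin d → ℝ)
    (herr : (1 / 2) * ((wtilde - M.mulVec w) ⬝ᵥ M⁻¹.mulVec (wtilde - M.mulVec w)) ≤ εt)
    (hsmall : Real.sqrt (2 * εt) ≤
      min (Real.sqrt (∑ i ∈ Finset.univ \ {(⟨0, Nat.lt_of_succ_lt hd⟩ : Fin d)},
              ξ i ^ 2 / β i))
          (Real.sqrt (ξ ⟨0, Nat.lt_of_succ_lt hd⟩ ^ 2 / β ⟨0, Nat.lt_of_succ_lt hd⟩))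
        * ((β ⟨0, Nat.lt_of_succ_lt hd⟩ - β ⟨1, hd⟩) / 4)) :
    G ((Real.sqrt (wtilde ⬝ᵥ wtilde))⁻¹ • wtilde)
      ≤ ((β ⟨0, Nat.lt_of_succ_lt hd⟩ + 3 * β ⟨1, hd⟩)
          / (3 * β ⟨0, Nat.lt_of_succ_lt hd⟩ + β ⟨1, hd⟩)) * G w := by
  set k : Fin d := ⟨0, Nat.lt_of_succ_lt hd⟩
  set l : Fin d := ⟨1, hd⟩
  set η : Fin d → ℝ := fun i => (wtilde - M *ᵥ w) ⬝ᵥ p i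
  have hG' : ∀ u, G u = weightedTan β k (fun i => u ⬝ᵥ p i) := hG
  have hcoord : (fun i => wtilde ⬝ᵥ p i) = fun i => β i * ξ i + η i := by
    funext i
    rw [hξ, ← mulVec_dotProduct_of_eigenvector hM h_eig, ← add_dotProduct, add_sub_cancel]
  have hGw : G w = weightedTan β k ξ := by
    rw [hG']
    exact congrArg _ (funext fun i => (hξ i).symm)
  have hη : √(∑ i, η i ^ 2 / β i) ≤ √(2 * εt) := by
    rw [← dotProduct_inv_mulVec_eq_sum (fun i => (hβ_pos i).ne') h_orth h_eig]
    exact Real.sqrt_le_sqrt (by linarith)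
  have hl : ∀ i ≠ k, β i ≤ β l := fun i hi =>
    hβ_mono l i (Fin.mk_le_of_le_val (Nat.one_le_iff_ne_zero.2 fun h => hi (Fin.ext h)))
  rw [hG', weightedTan_normalize, hcoord, hGw]
  exact weightedTan_mul_add_le hβ_pos hl (hβ_pos l).le
    (hβ_mono k l (Fin.mk_le_mk.2 zero_le_one)) hξ1 (hη.trans hsmall)

/-- One step of inexact shift-and-invert power iteration contracts the potential
`G(u) = √(∑_{i≥2} (uᵀpᵢ)²/βᵢ) / √((uᵀp₁)²/β₁)` by a factor
`(β₁ + 3β₂)/(3β₁ + β₂)`, provided the least-squares error `ε_t` is small enough. -/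
theorem stmt15 {d : ℕ} (hd : 1 < d) (M : Matrix (Fin d) (Fin d) ℝ) (hM : M.IsSymm)
    (β : Fin d → ℝ) (p : Fin d → (Fin d → ℝ))
    (hβ_pos : ∀ i, 0 < β i)
    (hβ_mono : ∀ i j : Fin d, i ≤ j → β j ≤ β i)
    (hβ_gap : β ⟨1, hd⟩ < β ⟨0, Nat.lt_of_succ_lt hd⟩)
    (h_orth : ∀ i j : Fin d, p i ⬝ᵥ p j = if i = j then 1 else 0)
    (h_eig : ∀ i, M.mulVec (p i) = β i • p i)
    (w : Fin d → ℝ) (hw : w ⬝ᵥ w = 1)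
    (ξ : Fin d → ℝ) (hξ : ∀ i, ξ i = w ⬝ᵥ p i)
    (hξ1 : ξ ⟨0, Nat.lt_of_succ_lt hd⟩ ≠ 0)
    (G : (Fin d → ℝ) → ℝ)
    (hG : ∀ u : Fin d → ℝ, G u =
      Real.sqrt (∑ i ∈ Finset.univ \ {(⟨0, Nat.lt_of_succ_lt hd⟩ : Fin d)},
          (u ⬝ᵥ p i) ^ 2 / β i)
        / Real.sqrt ((u ⬝ᵥ p ⟨0, Nat.lt_of_succ_lt hd⟩) ^ 2 / β ⟨0, Nat.lt_of_succ_lt hd⟩))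
    (εt : ℝ) (hεt : 0 ≤ εt)
    (wtilde : Fin d → ℝ)
    (herr : (1 / 2) * ((wtilde - M.mulVec w) ⬝ᵥ M⁻¹.mulVec (wtilde - M.mulVec w)) ≤ εt)
    (hsmall : Real.sqrt (2 * εt) ≤
      min (Real.sqrt (∑ i ∈ Finset.univ \ {(⟨0, Nat.lt_of_succ_lt hd⟩ : Fin d)},
              ξ i ^ 2 / β i))
          (Real.sqrt (ξ ⟨0, Nat.lt_of_succ_lt hd⟩ ^ 2 / β ⟨0, Nat.lt_of_succ_lt hd⟩))
        * ((β ⟨0, Nat.lt_of_succ_lt hd⟩ - β ⟨1, hd⟩) / 4)) :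
    G ((Real.sqrt (wtilde ⬝ᵥ wtilde))⁻¹ • wtilde)
      ≤ ((β ⟨0, Nat.lt_of_succ_lt hd⟩ + 3 * β ⟨1, hd⟩)
          / (3 * β ⟨0, Nat.lt_of_succ_lt hd⟩ + β ⟨1, hd⟩)) * G w :=
  stmt15_general hd M hM β p hβ_pos hβ_mono h_orth h_eig w ξ hξ hξ1 G hG εt wtilde herr hsmall
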